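/- arXiv:2505.06163 — 6 statements merged into one kernel-verified Lean document; each statement's English description precedes it below -/
import Mathlib

section
/- For every finite set N of agents, every symmetric valuation v on N, and every partition π of N, there exists a matching μ of N (a partition of N into parts of size at most 2) such that SW(π) ≤ 2·SW(μ). In particular, a maximum weight matching is a 1/2-approximation of the maximum social welfare in symmetric fractional hedonic games. -/
/-!
It suffices to treat a single coalition `S`, since matchings of the parts of `π` combine into a
matching of `N`. For `#S ≥ 3`, `SW(S)` is the mean of `2 * SW({i, j}) + SW(S \ {i, j})` over
the ordered pairs `(i, j)` of distinct agents of `S`, so some pair satisfies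
`SW(S) ≤ 2 * SW({i, j}) + SW(S \ {i, j})`, and induction on `S \ {i, j}` concludes.
For `#S ≤ 2`, `S` itself is a matching, unless `SW(S) ≤ 0`, when the partition into
singletons (of welfare `0`) does.
-/

open Finset

/-- Social welfare of a coalition `C` in a fractional hedonic game with valuation `v`:
`SW(C) = (Σ_{i∈C} Σ_{j∈C, j≠i} v i j) / |C|`. -/
noncomputable def coalSW {α : Type*} [DecidableEq α] (v : α → α → ℝ) (C : Finset α) : ℝ :=
  (∑ i ∈ C, ∑ j ∈ C.erase i, v i j) / (C.card : ℝ)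

/-- Social welfare of a partition: the sum of the social welfares of its parts. -/
noncomputable def partSW {α : Type*} [DecidableEq α] (v : α → α → ℝ) {N : Finset α}
    (π : Finpartition N) : ℝ :=
  ∑ C ∈ π.parts, coalSW v C

/-- A matching is a partition all of whose parts have at most 2 elements.
For a symmetric valuation with zero diagonal, the social welfare of a matching
(as a partition) equals the sum of `v i j` over its two-element parts `{i, j}`. -/
def IsMatching {α : Type*} [DecidableEq α] {N : Finset α} (π : Finpartition N) : Prop :=
  ∀ p ∈ π.parts, p.card ≤ 2

section

variable {α : Type*} (v : α → α → ℝ)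

lemma natCast_card_offDiag (S : Finset α) : (#S.offDiag : ℝ) = #S * (#S - 1) := by
  rw [offDiag_card, Nat.cast_sub (Nat.le_mul_self _)]
  push_cast
  ring

noncomputable def offDiagSum (S : Finset α) : ℝ :=
  ∑ p ∈ S.offDiag, v p.1 p.2

lemma sum_offDiag_add_swap (S : Finset α) :
    ∑ p ∈ S.offDiag, (v p.1 p.2 + v p.2 p.1) = 2 * offDiagSum v S := by
  have hswap : ∑ p ∈ S.offDiag, v p.2 p.1 = offDiagSum v S :=
    sum_equiv (Equiv.prodComm α α) (by simp [ne_comm, and_left_comm]) (by simp)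
  rw [sum_add_distrib, hswap, offDiagSum]
  ring

variable [DecidableEq α]

lemma coalSW_eq_offDiagSum_div (S : Finset α) : coalSW v S = offDiagSum v S / #S := by
  rw [coalSW, offDiagSum, sum_finset_product S.offDiag S (fun i => S.erase i)]
  intro p
  simp only [mem_offDiag, mem_erase]
  tauto

lemma coalSW_singleton (i : α) : coalSW v {i} = 0 := by
  simp [coalSW]

lemma coalSW_pair {i j : α} (hij : i ≠ j) : coalSW v {i, j} = (v i j + v j i) / 2 := by
  rw [coalSW, sum_pair hij, erase_insert (notMem_singleton.2 hij), pair_comm,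
    erase_insert (notMem_singleton.2 hij.symm), sum_singleton, sum_singleton,
    card_pair hij.symm]
  norm_num

lemma natCast_card_sdiff_pair {S : Finset α} {p : α × α} (hp : p ∈ S.offDiag) :
    (#(S \ {p.1, p.2}) : ℝ) = #S - 2 := by
  obtain ⟨h1, h2, hne⟩ := mem_offDiag.1 hp
  have hcard := card_sdiff_add_card_eq_card (insert_subset h1 (singleton_subset_iff.2 h2))
  rw [card_pair hne] at hcard
  rw [← hcard]
  push_cast
  ring

/-- Double counting: a pair `q` contributes to `offDiagSum v (S \ {p.1, p.2})` exactly for the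
`(#S - 2) * (#S - 3)` pairs `p` disjoint from it. -/
lemma sum_offDiagSum_sdiff_pair (S : Finset α) :
    ∑ p ∈ S.offDiag, offDiagSum v (S \ {p.1, p.2}) = (#S - 2) * (#S - 3) * offDiagSum v S := by
  unfold offDiagSum
  rw [sum_comm' (t' := S.offDiag) (s' := fun q => (S \ {q.1, q.2}).offDiag)
    (by intro p q; simp only [mem_offDiag, mem_sdiff, mem_insert, mem_singleton]; tauto),
    mul_sum]
  refine sum_congr rfl fun q hq => ?_
  rw [sum_const, nsmul_eq_mul, natCast_card_offDiag, natCast_card_sdiff_pair hq]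
  ring

lemma sum_offDiag_two_mul_coalSW_pair_add_coalSW_sdiff {S : Finset α} (hS : 3 ≤ #S) :
    ∑ p ∈ S.offDiag, (2 * coalSW v {p.1, p.2} + coalSW v (S \ {p.1, p.2})) =
      #S.offDiag * coalSW v S := by
  have hm : (3 : ℝ) ≤ #S := by exact_mod_cast hS
  have hterm : ∀ p ∈ S.offDiag, 2 * coalSW v {p.1, p.2} + coalSW v (S \ {p.1, p.2}) =
      (v p.1 p.2 + v p.2 p.1) + offDiagSum v (S \ {p.1, p.2}) / (#S - 2) := fun p hp => by
    rw [coalSW_pair v (mem_offDiag.1 hp).2.2, coalSW_eq_offDiagSum_div,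
      natCast_card_sdiff_pair hp]
    ring
  rw [sum_congr rfl hterm, sum_add_distrib, ← sum_div, sum_offDiag_add_swap,
    sum_offDiagSum_sdiff_pair, natCast_card_offDiag, coalSW_eq_offDiagSum_div]
  have : (#S : ℝ) - 2 ≠ 0 := by linarith
  field_simp
  ring

lemma exists_coalSW_le_two_mul_coalSW_pair_add_coalSW_sdiff {S : Finset α} (hS : 3 ≤ #S) :
    ∃ p ∈ S.offDiag,
      coalSW v S ≤ 2 * coalSW v {p.1, p.2} + coalSW v (S \ {p.1, p.2}) := by
  have hne : S.offDiag.Nonempty := by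
    rw [← card_pos, offDiag_card]
    exact Nat.sub_pos_of_lt (Nat.lt_mul_self_iff.2 (by omega))
  refine exists_le_of_sum_le hne ?_
  rw [sum_const, nsmul_eq_mul, sum_offDiag_two_mul_coalSW_pair_add_coalSW_sdiff v hS]

end

namespace Finpartition

variable {α : Type*} [DecidableEq α] (v : α → α → ℝ) {S : Finset α}

lemma isMatching_bot : IsMatching (⊥ : Finpartition S) := by
  intro p hp
  obtain ⟨a, -, rfl⟩ := mem_bot_iff.1 hp
  simp

lemma partSW_bot : partSW v (⊥ : Finpartition S) = 0 := by
  simp [partSW, coalSW_singleton]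

lemma isMatching_indiscrete (hS : S ≠ ⊥) (h2 : #S ≤ 2) : IsMatching (indiscrete hS) := by
  intro p hp
  rw [indiscrete_parts, mem_singleton] at hp
  rwa [hp]

lemma partSW_indiscrete (hS : S ≠ ⊥) : partSW v (indiscrete hS) = coalSW v S := by
  simp [partSW]

section Extend

variable {T U : Finset α} {P : Finpartition T} {hU : U ≠ ⊥} {hTU : Disjoint T U}
  {hS : T ⊔ U = S}

lemma IsMatching.extend (hP : IsMatching P) (hU2 : #U ≤ 2) :
    IsMatching (P.extend hU hTU hS) := by
  intro p hp
  rcases mem_insert.1 hp with rfl | hp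
  exacts [hU2, hP p hp]

lemma partSW_extend : partSW v (P.extend hU hTU hS) = coalSW v U + partSW v P :=
  sum_insert fun h ↦ hU <| hTU.symm.eq_bot_of_le <| P.le h

end Extend

section Bind

variable {P : Finpartition S} {Q : ∀ A ∈ P.parts, Finpartition A}

lemma IsMatching.bind (hQ : ∀ A hA, IsMatching (Q A hA)) : IsMatching (P.bind Q) := by
  intro p hp
  obtain ⟨A, hA, hp⟩ := mem_bind.1 hp
  exact hQ A hA p hp

lemma partSW_bind : partSW v (P.bind Q) = ∑ A ∈ P.parts.attach, partSW v (Q A.1 A.2) := by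
  refine sum_biUnion fun A _ B _ hAB => disjoint_left.2 fun p hpA hpB => ?_
  have hpAB : p ≤ A.1 ⊓ B.1 := le_inf ((Q A.1 A.2).le hpA) ((Q B.1 B.2).le hpB)
  exact (Q A.1 A.2).ne_bot hpA <| eq_bot_iff.2 <|
    hpAB.trans (P.disjoint A.2 B.2 (Subtype.coe_injective.ne hAB)).le_bot

end Bind

end Finpartition

open Finpartition

lemma exists_isMatching_coalSW_le_two_mul_partSW {α : Type*} [DecidableEq α]
    (v : α → α → ℝ) (S : Finset α) :
    ∃ μ : Finpartition S, IsMatching μ ∧ coalSW v S ≤ 2 * partSW v μ := by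
  induction S using Finset.strongInduction with
  | H S ih =>
  by_cases hS : 3 ≤ #S
  · obtain ⟨p, hp, hle⟩ := exists_coalSW_le_two_mul_coalSW_pair_add_coalSW_sdiff v hS
    obtain ⟨h1, h2, -⟩ := mem_offDiag.1 hp
    have hsub : {p.1, p.2} ⊆ S := insert_subset h1 (singleton_subset_iff.2 h2)
    obtain ⟨μ, hμ, hμle⟩ := ih (S \ {p.1, p.2}) (sdiff_ssubset hsub (insert_nonempty _ _))
    refine ⟨μ.extend (insert_ne_empty _ _) sdiff_disjoint (sdiff_union_of_subset hsub),
      hμ.extend card_le_two, ?_⟩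
    rw [partSW_extend]
    linarith
  by_cases hpos : coalSW v S ≤ 0
  · exact ⟨⊥, isMatching_bot, by rwa [partSW_bot, mul_zero]⟩
  have hne : S ≠ ⊥ := by
    rintro rfl
    simp [coalSW] at hpos
  refine ⟨indiscrete hne, isMatching_indiscrete hne (by omega), ?_⟩
  rw [partSW_indiscrete]
  linarith

theorem stmt0_general {α : Type*} [DecidableEq α] (N : Finset α) (v : α → α → ℝ)
    (π : Finpartition N) :
    ∃ μ : Finpartition N, IsMatching μ ∧ partSW v π ≤ 2 * partSW v μ := by
  choose μ hμ hle using fun C : Finset α => exists_isMatching_coalSW_le_two_mul_partSW v C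
  refine ⟨π.bind fun C _ => μ C, IsMatching.bind fun C _ => hμ C, ?_⟩
  rw [partSW_bind, partSW, ← sum_attach, mul_sum]
  exact sum_le_sum fun C _ => hle C

/-- For every finite agent set `N`, symmetric valuation `v`, and partition `π` of `N`,
there is a matching `μ` of `N` with `SW(π) ≤ 2·SW(μ)`; in particular a maximum weight
matching is a `1/2`-approximation of the maximum social welfare. -/
theorem stmt0 {α : Type*} [DecidableEq α] (N : Finset α) (v : α → α → ℝ)
    (hsymm : ∀ i j, v i j = v j i) (hdiag : ∀ i, v i i = 0)
    (π : Finpartition N) :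
    ∃ μ : Finpartition N, IsMatching μ ∧ partSW v π ≤ 2 * partSW v μ :=
  stmt0_general N v π
end

section
/- Let β be a real number with β > 1/(3 + 2·√2). Then there exists no sequence of real numbers (x_i)_{i≥1} satisfying x_1 = 1, x_i ≥ 0 for all i ≥ 2, and, for all i ≥ 1, x_i ≥ β·(x_{i+1} + Σ_{j=1}^{i+1} x_j). -/
/-!
Put `T n = x₁ + ⋯ + x_{n+1}`. The hypothesis at `i = 1` forces `β ≤ 1`, and the others say
`2β T(n+2) ≤ (1+β) T(n+1) - T n`. For `3 - 2√2 < β < 3 + 2√2` the characteristic polynomial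
`2βt² - (1+β)t + 1` has no real root, so it is bounded below by some `ε > 0`. Then the ratios
`r n = T(n+1) / T n` of the positive sequence `T` satisfy `r n (r n - r (n+1)) ≥ ε / 2β`: they
decrease by a step bounded away from `0`, and eventually become negative.
-/

open Finset

lemma exists_nonpos_of_le_mul_sub_succ {r : ℕ → ℝ} {δ : ℝ} (hδ : 0 < δ)
    (hstep : ∀ n, δ ≤ r n * (r n - r (n + 1))) : ∃ n, r n ≤ 0 := by
  by_contra! hpos
  have hanti : Antitone r := antitone_nat_of_succ_le fun n => by nlinarith [hstep n, hpos n]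
  set d := δ / r 0
  have hdrop : ∀ n, r (n + 1) ≤ r n - d := fun n => by
    have hdiff : 0 ≤ r n - r (n + 1) := sub_nonneg.2 (hanti n.le_succ)
    have : δ ≤ r 0 * (r n - r (n + 1)) :=
      (hstep n).trans (mul_le_mul_of_nonneg_right (hanti (Nat.zero_le n)) hdiff)
    linarith [(div_le_iff₀' (hpos 0)).2 this]
  have hlin : ∀ n : ℕ, r n ≤ r 0 - n * d := fun n => by
    induction n with
    | zero => simp
    | succ n ih => push_cast; linarith [hdrop n]
  have hd : 0 < d := div_pos hδ (hpos 0)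
  obtain ⟨n, hn⟩ := exists_nat_gt (r 0 / d)
  linarith [hlin n, hpos n, (div_lt_iff₀ hd).1 hn]

theorem exists_nonpos_of_recurrence_le {a b c : ℝ} (hc : 0 < c) (hdisc : b ^ 2 < 4 * a * c)
    {S : ℕ → ℝ} (hrec : ∀ n, c * S (n + 2) ≤ b * S (n + 1) - a * S n) : ∃ n, S n ≤ 0 := by
  by_contra! hpos
  obtain ⟨n, hn⟩ := exists_nonpos_of_le_mul_sub_succ (r := fun n => S (n + 1) / S n)
    (δ := (4 * a * c - b ^ 2) / (4 * c ^ 2)) (div_pos (by linarith) (by positivity)) fun n => by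
      have hs := hpos n
      have ht := hpos (n + 1)
      have hu := hpos (n + 2)
      have hrat : S (n + 1) / S n * (S (n + 1) / S n - S (n + 2) / S (n + 1))
          = (S (n + 1) ^ 2 - S (n + 2) * S n) / S n ^ 2 := by
        field_simp
      -- with `s, t, u = S n, S (n+1), S (n+2)`:
      -- `4c²(t² - us) ≥ 4c²t² - 4bc st + 4ac s² = (2ct - bs)² + (4ac - b²)s²`
      rw [hrat, div_le_div_iff₀ (by positivity) (by positivity)]
      nlinarith [mul_le_mul_of_nonneg_left (hrec n) (by positivity : (0 : ℝ) ≤ 4 * c * S n),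
        sq_nonneg (2 * c * S (n + 1) - b * S n)]
  exact (div_pos (hpos (n + 1)) (hpos n)).not_ge hn

lemma one_div_three_add_two_mul_sqrt_two : 1 / (3 + 2 * √2) = 3 - 2 * √2 := by
  have h2 : √2 ^ 2 = 2 := Real.sq_sqrt zero_le_two
  rw [div_eq_iff (by positivity)]
  nlinarith

lemma one_add_sq_lt_eight_mul {β : ℝ} (hlo : 3 - 2 * √2 < β) (hhi : β < 3 + 2 * √2) :
    (1 + β) ^ 2 < 8 * β := by
  have h2 : √2 ^ 2 = 2 := Real.sq_sqrt zero_le_two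
  nlinarith [mul_pos (sub_pos.2 hlo) (sub_pos.2 hhi)]

/-- For `β > 1/(3 + 2√2)` there is no sequence `(x_i)_{i ≥ 1}` with `x_1 = 1`,
`x_i ≥ 0` for `i ≥ 2`, and `x_i ≥ β·(x_{i+1} + Σ_{j=1}^{i+1} x_j)` for all `i ≥ 1`. -/
theorem stmt2 (β : ℝ) (hβ : β > 1 / (3 + 2 * Real.sqrt 2)) :
    ¬ ∃ x : ℕ → ℝ, x 1 = 1 ∧ (∀ i, 2 ≤ i → 0 ≤ x i) ∧
      ∀ i, 1 ≤ i → x i ≥ β * (x (i + 1) + ∑ j ∈ Finset.Icc 1 (i + 1), x j) := by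
  rintro ⟨x, hx1, hx, hrec⟩
  have hβ_pos : 0 < β := lt_trans (by positivity) hβ
  rw [one_div_three_add_two_mul_sqrt_two] at hβ
  set T : ℕ → ℝ := fun n => ∑ j ∈ Icc 1 (n + 1), x j
  have hT_succ : ∀ n, T (n + 1) = T n + x (n + 2) := fun n => sum_Icc_succ_top (by omega) _
  have hx_nonneg : ∀ j, 1 ≤ j → 0 ≤ x j := fun j hj =>
    hj.eq_or_lt.elim (fun h => h ▸ hx1 ▸ zero_le_one) (hx j)
  have hT_ge : ∀ n, 1 ≤ T n := fun n =>
    hx1 ▸ single_le_sum (fun j hj => hx_nonneg j (mem_Icc.1 hj).1) (by simp)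
  have hβ_le_one : β ≤ 1 := by nlinarith [hrec 1 le_rfl, hT_ge 1, hx 2 le_rfl]
  obtain ⟨n, hn⟩ := exists_nonpos_of_recurrence_le (a := 1) (b := 1 + β) (c := 2 * β)
    (by positivity)
    (by nlinarith [one_add_sq_lt_eight_mul hβ (by linarith [Real.sqrt_nonneg 2])]) (S := T)
    fun n => by linear_combination hrec (n + 2) (by omega) + β * hT_succ (n + 1) - hT_succ n
  linarith [hT_ge n]
end

section
/- Let k ≥ 2 be an integer and let h : ℕ → ℝ be a function such that h(2) > 1/3 and, for every integer m with 3 ≤ m ≤ k, h(m) ≥ 1/3 + (1/m)·Σ_{i=0}^{m−3} (C(m−2, i)/C(m−1, i))·h(m−1−i), where C(n, r) denotes the binomial coefficient. Then h(k) > 2/3 − 2/(3k). -/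
/-!
Induct on `m` with the bound `g m = 2/3 - 2/(3m)`. Since `C(n,i)/C(n+1,i) = (n+1-i)/(n+1)`, the
`i`-th weighted term of the recursion at `m = n + 2` is at least
`(n+1-i)/(n+1) · g(n+1-i) = 2(n-i)/(3(n+1))`, and these lower bounds sum to exactly `n/3`.
Then `1/3 + n/(3(n+2)) = g(n+2)`.
-/

open Finset

theorem cast_choose_div_cast_choose_succ {K : Type*} [Field K] [CharZero K] {n i : ℕ}
    (hi : i ≤ n + 1) :
    (n.choose i : K) / ((n + 1).choose i : K) = (n + 1 - i) / (n + 1) := by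
  have hchoose : ((n + 1).choose i : K) ≠ 0 := by exact_mod_cast (Nat.choose_pos hi).ne'
  rw [div_eq_div_iff hchoose (Nat.cast_add_one_ne_zero n)]
  have := congrArg (Nat.cast : ℕ → K) (Nat.choose_mul_succ_eq n i)
  push_cast [Nat.cast_sub hi] at this
  rw [this, mul_comm]

theorem two_mul_sum_range_cast_sub {R : Type*} [CommRing R] (n : ℕ) :
    2 * ∑ i ∈ range n, ((n : R) - i) = n * (n + 1) := by
  induction n with
  | zero => simp
  | succ n ih =>
    have hshift : ∀ i ∈ range n, ((n + 1 : ℕ) : R) - (i + 1 : ℕ) = n - i := by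
      intro i _
      push_cast
      ring
    rw [sum_range_succ', sum_congr rfl hshift, mul_add, ih]
    push_cast
    ring

theorem sum_range_ratio_mul_bound_eq (n : ℕ) :
    ∑ i ∈ range n, (n + 1 - i : ℝ) / (n + 1) * (2 / 3 - 2 / (3 * (n + 1 - i))) = n / 3 := by
  have hterm : ∀ i ∈ range n, (n + 1 - i : ℝ) / (n + 1) * (2 / 3 - 2 / (3 * (n + 1 - i)))
      = 2 / (3 * (n + 1)) * ((n : ℝ) - i) := by
    intro i hi
    have hin : (i : ℝ) < n := by exact_mod_cast mem_range.mp hi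
    have : (n + 1 - i : ℝ) ≠ 0 := by linarith
    field_simp
    ring
  rw [sum_congr rfl hterm, ← mul_sum]
  have hsum := two_mul_sum_range_cast_sub (R := ℝ) n
  field_simp
  linarith

theorem lt_sum_choose_ratio_mul (n : ℕ) (hn : 1 ≤ n) (h : ℕ → ℝ)
    (hbound : ∀ j, 2 ≤ j → j ≤ n + 1 → 2 / 3 - 2 / (3 * (j : ℝ)) < h j) :
    (n : ℝ) / 3 <
      ∑ i ∈ range n, ((n.choose i : ℝ) / ((n + 1).choose i : ℝ)) * h (n + 1 - i) := by
  rw [← sum_range_ratio_mul_bound_eq]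
  refine sum_lt_sum_of_nonempty (nonempty_range_iff.mpr (by omega)) fun i hi => ?_
  have hin : i < n := mem_range.mp hi
  have hcast : ((n + 1 - i : ℕ) : ℝ) = n + 1 - i := by
    push_cast [Nat.cast_sub (by omega : i ≤ n + 1)]
    ring
  have hh := hbound (n + 1 - i) (by omega) (by omega)
  rw [hcast] at hh
  rw [cast_choose_div_cast_choose_succ (by omega)]
  have hpos : (0 : ℝ) < (n + 1 - i) / (n + 1) := by
    have : (i : ℝ) < n := by exact_mod_cast hin
    apply div_pos <;> linarith
  exact mul_lt_mul_of_pos_left hh hpos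

/-- The combinatorial induction behind the star lower bound: if `h 2 > 1/3` and for
every `3 ≤ m ≤ k` we have
`h m ≥ 1/3 + (1/m)·Σ_{i=0}^{m−3} (C(m−2,i)/C(m−1,i))·h(m−1−i)`,
then `h k > 2/3 − 2/(3k)`. -/
theorem stmt6 (k : ℕ) (hk : 2 ≤ k) (h : ℕ → ℝ) (h2 : h 2 > 1/3)
    (hrec : ∀ m, 3 ≤ m → m ≤ k →
      h m ≥ 1/3 + (1/(m : ℝ)) * ∑ i ∈ Finset.range (m - 2),
        (((m - 2).choose i : ℝ) / ((m - 1).choose i : ℝ)) * h (m - 1 - i)) :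
    h k > 2/3 - 2/(3 * (k : ℝ)) := by
  suffices H : ∀ m, 2 ≤ m → m ≤ k → 2 / 3 - 2 / (3 * (m : ℝ)) < h m from H k hk le_rfl
  intro m
  induction m using Nat.strong_induction_on with
  | _ m ih =>
  intro hm2 hmk
  obtain rfl | ⟨n, hn, rfl⟩ : m = 2 ∨ ∃ n, 1 ≤ n ∧ m = n + 2 :=
    (eq_or_lt_of_le hm2).imp Eq.symm fun hm => ⟨m - 2, by omega, by omega⟩
  · norm_num; linarith
  have hstep := hrec (n + 2) (by omega) hmk
  simp only [Nat.add_sub_cancel, show n + 2 - 1 = n + 1 by omega] at hstep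
  have hsum := lt_sum_choose_ratio_mul n hn h fun j hj2 hjn => ih j (by omega) hj2 (by omega)
  have hpos : (0 : ℝ) < 1 / ((n + 2 : ℕ) : ℝ) := by positivity
  have hgoal :
      2 / 3 - 2 / (3 * ((n + 2 : ℕ) : ℝ)) = 1 / 3 + 1 / ((n + 2 : ℕ) : ℝ) * (n / 3) := by
    push_cast; field_simp; ring
  rw [hgoal]
  linarith [mul_lt_mul_of_pos_left hsum hpos]
end

section
/- Let I and J be finite sets of natural numbers with I ∪ J nonempty and t = max(I ∪ J), let ε be a real number with 0 < ε < 1, let c ∈ ℝ, and let p, q : ℕ → ℝ and r ∈ ℝ satisfy: p i ≥ 0 for i ∈ I, q j ≥ 0 for j ∈ J, r ≥ 0, Σ_{i∈I} p i + r ≤ 1, and Σ_{j∈J} q j + r ≤ 1. If c·(1/ε)^{t+1} ≤ Σ_{i∈I} p i·(1/ε)^i + Σ_{j∈J} q j·(1/ε)^j + r·(1/ε)^{t+1}, then r ≥ c − 2ε. -/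
open Finset

theorem Finset.sum_mul_pow_le_pow_of_sum_le_one {s : Finset ℕ} {w : ℕ → ℝ} {x : ℝ} {t : ℕ}
    (hx : 1 ≤ x) (hw : ∀ i ∈ s, 0 ≤ w i) (hws : ∑ i ∈ s, w i ≤ 1) (hst : ∀ i ∈ s, i ≤ t) :
    ∑ i ∈ s, w i * x ^ i ≤ x ^ t :=
  calc ∑ i ∈ s, w i * x ^ i
      ≤ ∑ i ∈ s, w i * x ^ t :=
        sum_le_sum fun i hi => mul_le_mul_of_nonneg_left (pow_le_pow_right₀ hx (hst i hi)) (hw i hi)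
    _ = (∑ i ∈ s, w i) * x ^ t := (sum_mul ..).symm
    _ ≤ x ^ t := mul_le_of_le_one_left (by positivity) hws

theorem stmt8_general (I J : Finset ℕ) (t : ℕ)
    (htmax : ∀ k ∈ I ∪ J, k ≤ t)
    (ε : ℝ) (hε0 : 0 < ε) (hε1 : ε < 1) (c : ℝ)
    (p q : ℕ → ℝ) (r : ℝ)
    (hp : ∀ i ∈ I, 0 ≤ p i) (hq : ∀ j ∈ J, 0 ≤ q j) (hr : 0 ≤ r)
    (hps : ∑ i ∈ I, p i + r ≤ 1) (hqs : ∑ j ∈ J, q j + r ≤ 1)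
    (hc : c * (1/ε)^(t+1) ≤
      ∑ i ∈ I, p i * (1/ε)^i + ∑ j ∈ J, q j * (1/ε)^j + r * (1/ε)^(t+1)) :
    r ≥ c - 2*ε := by
  have he : 1 ≤ 1 / ε := one_le_one_div hε0 hε1.le
  have hP := sum_mul_pow_le_pow_of_sum_le_one he hp (by linarith)
    fun i hi => htmax i (mem_union_left J hi)
  have hQ := sum_mul_pow_le_pow_of_sum_le_one he hq (by linarith)
    fun j hj => htmax j (mem_union_right I hj)
  -- the leaves contribute at most `2 (1/ε)^t = 2ε (1/ε)^(t+1)`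
  have hscaled : c * (1 / ε) ^ (t + 1) ≤ (2 * ε + r) * (1 / ε) ^ (t + 1) :=
    calc c * (1 / ε) ^ (t + 1) ≤ 2 * (1 / ε) ^ t + r * (1 / ε) ^ (t + 1) := by linarith
      _ = (2 * ε + r) * (1 / ε) ^ (t + 1) := by rw [pow_succ]; field_simp
  linarith [le_of_mul_le_mul_right hscaled (by positivity)]

/-- Bi-star instance computation: if `I ∪ J` is a nonempty finite set of naturals with
maximum element `t`, `0 < ε < 1`, the probabilities `p i`, `q j`, `r` are nonnegative
with `Σ_{i∈I} p i + r ≤ 1` and `Σ_{j∈J} q j + r ≤ 1`, and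
`c·(1/ε)^{t+1} ≤ Σ_{i∈I} p i·(1/ε)^i + Σ_{j∈J} q j·(1/ε)^j + r·(1/ε)^{t+1}`,
then `r ≥ c − 2ε`. -/
theorem stmt8 (I J : Finset ℕ) (hIJ : (I ∪ J).Nonempty) (t : ℕ) (htIJ : t ∈ I ∪ J)
    (htmax : ∀ k ∈ I ∪ J, k ≤ t)
    (ε : ℝ) (hε0 : 0 < ε) (hε1 : ε < 1) (c : ℝ)
    (p q : ℕ → ℝ) (r : ℝ)
    (hp : ∀ i ∈ I, 0 ≤ p i) (hq : ∀ j ∈ J, 0 ≤ q j) (hr : 0 ≤ r)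
    (hps : ∑ i ∈ I, p i + r ≤ 1) (hqs : ∑ j ∈ J, q j + r ≤ 1)
    (hc : c * (1/ε)^(t+1) ≤
      ∑ i ∈ I, p i * (1/ε)^i + ∑ j ∈ J, q j * (1/ε)^j + r * (1/ε)^(t+1)) :
    r ≥ c - 2*ε :=
  stmt8_general I J t htmax ε hε0 hε1 c p q r hp hq hr hps hqs hc
end

section
/- Let N be a finite set with n elements, let b ∈ N, let I ⊆ N \ {b}, and let m be a natural number with m ≤ |I| + 1. For a uniformly random bijection σ : {1, …, n} → N (the arrival order), the probability that fewer than m elements of I arrive before b, i.e., P(|{i ∈ I : σ⁻¹(i) < σ⁻¹(b)}| < m), equals m/(|I| + 1). -/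
/-!
Let `J = insert b I`. Exchanging the arrival positions of `b` and of some `y ∈ J` is a bijection
of arrival orders which turns "`b` has rank `k` in `J`" into "`y` has rank `k` in `J`". Summing
over `y ∈ J` counts every arrival order exactly once, since in each order exactly one element of
`J` has rank `k`. Hence every rank `k ≤ |I|` of `b` has probability `1 / (|I| + 1)`, and the
event "rank `< m`" is the union of `m` of these.
-/

open Finset

section

variable {α β : Type*} [LinearOrder β]

/-- With `f = σ.symm`, the number of elements of `J` that arrive before `y`. -/
def rankBy (f : α → β) (J : Finset α) (y : α) : ℕ := #{x ∈ J | f x < f y}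

lemma rankBy_insert_self [DecidableEq α] (f : α → β) (J : Finset α) (y : α) :
    rankBy f (insert y J) y = rankBy f J y := by
  simp [rankBy, filter_insert]

lemma rankBy_comp_swap [DecidableEq α] (f : α → β) {J : Finset α} {b y : α} (hb : b ∈ J)
    (hy : y ∈ J) :
    rankBy (f ∘ Equiv.swap b y) J b = rankBy f J y := by
  have hswap : ∀ x ∈ J, Equiv.swap b y x ∈ J := fun x hx => by
    rcases eq_or_ne x b with rfl | hxb
    · simpa
    rcases eq_or_ne x y with rfl | hxy
    · simpa
    rwa [Equiv.swap_apply_of_ne_of_ne hxb hxy]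
  refine card_nbij' (Equiv.swap b y) (Equiv.swap b y) ?_ ?_ ?_ ?_ <;>
    simp only [coe_filter, Set.MapsTo, Set.LeftInvOn, Set.mem_ofPred_eq, Function.comp_apply,
      Equiv.swap_apply_left, Equiv.swap_apply_self]
  · exact fun x hx => ⟨hswap x hx.1, hx.2⟩
  · exact fun x hx => ⟨hswap x hx.1, by simpa using hx.2⟩
  · simp
  · simp

lemma rankBy_lt_rankBy {f : α → β} {J : Finset α} {y y' : α} (hy : y ∈ J) (h : f y < f y') :
    rankBy f J y < rankBy f J y' := by
  refine card_lt_card ⟨fun x hx =>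
    mem_filter.2 ⟨(mem_filter.1 hx).1, (mem_filter.1 hx).2.trans h⟩, fun hsub => ?_⟩
  simpa using hsub (mem_filter.2 ⟨hy, h⟩)

lemma rankBy_lt_card (f : α → β) {J : Finset α} {y : α} (hy : y ∈ J) : rankBy f J y < #J :=
  card_lt_card ⟨filter_subset _ _, fun h => by simpa using h hy⟩

lemma rankBy_injOn {f : α → β} {J : Finset α} (hf : Set.InjOn f J) :
    Set.InjOn (rankBy f J) J := by
  intro y hy y' hy' h
  rcases lt_trichotomy (f y) (f y') with hlt | heq | hgt
  · exact absurd h (rankBy_lt_rankBy hy hlt).ne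
  · exact hf hy hy' heq
  · exact absurd h (rankBy_lt_rankBy hy' hgt).ne'

lemma image_rankBy [DecidableEq α] {f : α → β} {J : Finset α} (hf : Set.InjOn f J) :
    J.image (rankBy f J) = range #J :=
  eq_of_subset_of_card_le (fun k hk => by
      obtain ⟨y, hy, rfl⟩ := mem_image.1 hk
      exact mem_range.2 (rankBy_lt_card f hy))
    (by rw [card_range, card_image_of_injOn (rankBy_injOn hf)])

lemma card_filter_rankBy_eq_one {f : α → β} {J : Finset α} (hf : Set.InjOn f J) {k : ℕ}
    (hk : k < #J) : #{y ∈ J | rankBy f J y = k} = 1 := by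
  classical
  have himage : ({y ∈ J | rankBy f J y = k}).image (rankBy f J) =
      {z ∈ J.image (rankBy f J) | z = k} :=
    (filter_image (p := (· = k))).symm
  rw [← card_image_of_injOn ((rankBy_injOn hf).mono (filter_subset _ J)), himage,
    image_rankBy hf, filter_eq', if_pos (mem_range.2 hk), card_singleton]

end

section

variable {α β : Type*} [Fintype α] [DecidableEq α] [Fintype β] [DecidableEq β] [LinearOrder β]

lemma card_filter_rankBy_eq_of_mem {J : Finset α} {b y : α} (hb : b ∈ J) (hy : y ∈ J) (k : ℕ) :
    #{σ : β ≃ α | rankBy σ.symm J b = k} = #{σ : β ≃ α | rankBy σ.symm J y = k} := by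
  have hcoe (σ : β ≃ α) : ⇑(σ.trans (Equiv.swap b y)).symm = σ.symm ∘ Equiv.swap b y := by
    ext; simp
  refine card_nbij' (·.trans (Equiv.swap b y)) (·.trans (Equiv.swap b y)) ?_ ?_ ?_ ?_ <;>
    simp only [coe_filter, Set.MapsTo, Set.LeftInvOn, Set.mem_ofPred_eq, mem_univ, true_and]
  · intro σ hσ
    rw [hcoe, Equiv.swap_comm, rankBy_comp_swap _ hy hb, hσ]
  · intro σ hσ
    rw [hcoe, rankBy_comp_swap _ hb hy, hσ]
  all_goals exact fun σ _ => by ext; simp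

lemma card_mul_card_filter_rankBy_eq {J : Finset α} {b : α} (hb : b ∈ J) {k : ℕ}
    (hk : k < #J) :
    #J * #{σ : β ≃ α | rankBy σ.symm J b = k} = Fintype.card (β ≃ α) :=
  calc #J * #{σ : β ≃ α | rankBy σ.symm J b = k}
      = ∑ y ∈ J, #{σ : β ≃ α | rankBy σ.symm J y = k} := by
        rw [sum_congr rfl fun y hy => (card_filter_rankBy_eq_of_mem hb hy k).symm, sum_const,
          smul_eq_mul]
    _ = ∑ σ : β ≃ α, #{y ∈ J | rankBy σ.symm J y = k} := by
        simp only [card_filter]; exact sum_comm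
    _ = ∑ _σ : β ≃ α, 1 :=
        sum_congr rfl fun σ _ => card_filter_rankBy_eq_one σ.symm.injective.injOn hk
    _ = Fintype.card (β ≃ α) := by simp

lemma card_mul_card_filter_rankBy_lt {J : Finset α} {b : α} (hb : b ∈ J) {m : ℕ}
    (hm : m ≤ #J) :
    #J * #{σ : β ≃ α | rankBy σ.symm J b < m} = m * Fintype.card (β ≃ α) := by
  rw [card_eq_sum_card_fiberwise (f := fun σ : β ≃ α => rankBy σ.symm J b) (t := range m)
    fun σ hσ => mem_range.2 (mem_filter.1 hσ).2, mul_sum]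
  calc _ = ∑ k ∈ range m, #J * #{σ : β ≃ α | rankBy σ.symm J b = k} :=
        sum_congr rfl fun k hk => by
          congr 2; ext σ; simpa using fun h => h ▸ mem_range.1 hk
    _ = m * Fintype.card (β ≃ α) := by
        rw [sum_congr rfl fun k hk =>
          card_mul_card_filter_rankBy_eq hb ((mem_range.1 hk).trans_le hm), sum_const,
          card_range, smul_eq_mul]

end

/-- Random arrival computation: let the agent set be a finite type `α` with `n`
elements, `b` an agent, `I` a finite set of agents not containing `b`, and
`m ≤ |I| + 1`.  For a uniformly random arrival order (a bijection
`σ : Fin n ≃ α`, with `σ.symm x` the arrival position of `x`), the probability that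
fewer than `m` elements of `I` arrive before `b` equals `m/(|I| + 1)`. -/
theorem stmt9 {α : Type*} [Fintype α] [DecidableEq α] (b : α) (I : Finset α)
    (hbI : b ∉ I) (m : ℕ) (hm : m ≤ I.card + 1) :
    ((Finset.univ.filter (fun σ : Fin (Fintype.card α) ≃ α =>
        (I.filter (fun i => σ.symm i < σ.symm b)).card < m)).card : ℝ) /
      ((Finset.univ : Finset (Fin (Fintype.card α) ≃ α)).card : ℝ) =
    (m : ℝ) / ((I.card : ℝ) + 1) := by
  have hJ : #(insert b I) = #I + 1 := card_insert_of_notMem hbI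
  have key := card_mul_card_filter_rankBy_lt (β := Fin (Fintype.card α)) (mem_insert_self b I)
    (hJ ▸ hm)
  have hpos : 0 < Fintype.card (Fin (Fintype.card α) ≃ α) :=
    Fintype.card_pos_iff.2 ⟨(Fintype.equivFin α).symm⟩
  simp only [rankBy_insert_self, hJ] at key
  rw [card_univ, div_eq_div_iff (by positivity) (by positivity), mul_comm]
  exact_mod_cast key
end

section
/- Let N be a finite set with a symmetric valuation v. Suppose that the simple graph on N whose edges are the pairs {i, j} with v i j > 0 is acyclic (a forest), and that for every pair of distinct i, j with v i j ≤ 0 it holds that v i j < −Σ_{{k,l} : v k l > 0} v k l (the negative valuations are smaller than the negative of the total sum of positive valuations over unordered pairs). Then every coalition C ⊆ N with |C| ≥ 3 satisfies SW(C) < 0. -/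
open Finset

/-!
Three agents of a forest cannot be pairwise adjacent, so every coalition of size at least 3
contains a pair `x ≠ y` with `v x y ≤ 0`. The two ordered terms `v x y` and `v y x` are each
below minus half the total positive valuation, so together they outweigh every positive term
of the welfare sum.
-/

theorem SimpleGraph.CliqueFree.exists_not_adj {α : Type*} {G : SimpleGraph α} {n : ℕ}
    (h : G.CliqueFree n) {s : Finset α} (hs : n ≤ #s) :
    ∃ x ∈ s, ∃ y ∈ s, x ≠ y ∧ ¬G.Adj x y := by
  obtain ⟨t, hts, rfl⟩ := exists_subset_card_eq hs
  have ht : ¬G.IsClique (t : Set α) := fun ht => h t ⟨ht, rfl⟩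
  simp only [SimpleGraph.IsClique, Set.Pairwise, mem_coe, not_forall] at ht
  obtain ⟨x, hx, y, hy, hxy, hadj⟩ := ht
  exact ⟨x, hts hx, y, hts hy, hxy, hadj⟩

theorem Finset.sum_erase_eq_sum_offDiag {α M : Type*} [DecidableEq α] [AddCommMonoid M]
    (s : Finset α) (f : α → α → M) :
    ∑ i ∈ s, ∑ j ∈ s.erase i, f i j = ∑ p ∈ s.offDiag, f p.1 p.2 :=
  (sum_finset_product (f := fun p => f p.1 p.2) s.offDiag s s.erase fun p => by
    simp only [mem_offDiag, mem_erase]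
    tauto).symm

section PositivePart

variable {ι M : Type*} [AddCommGroup M] [LinearOrder M] [IsOrderedAddMonoid M]

theorem Finset.sum_le_sum_filter_pos (s : Finset ι) (f : ι → M) :
    ∑ x ∈ s, f x ≤ ∑ x ∈ s with 0 < f x, f x := by
  rw [← sum_filter_add_sum_filter_not s (0 < f ·)]
  exact add_le_of_nonpos_right (sum_nonpos fun x hx => not_lt.1 (mem_filter.1 hx).2)

theorem Finset.sum_neg_of_add_lt_neg_sum_pos [DecidableEq ι] {s t : Finset ι} (hst : s ⊆ t)
    {f : ι → M} {p q : ι} (hp : p ∈ s) (hq : q ∈ s) (hpq : p ≠ q)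
    (hfpq : f p + f q < -∑ x ∈ t with 0 < f x, f x) :
    ∑ x ∈ s, f x < 0 := by
  have hq' : q ∈ s.erase p := mem_erase.2 ⟨hpq.symm, hq⟩
  have hrest : ∑ x ∈ (s.erase p).erase q, f x ≤ ∑ x ∈ t with 0 < f x, f x :=
    (sum_le_sum_filter_pos _ f).trans <|
      sum_le_sum_of_subset_of_nonneg
        (filter_subset_filter _ ((erase_subset _ _).trans ((erase_subset _ _).trans hst)))
        fun x hx _ => (mem_filter.1 hx).2.le
  calc ∑ x ∈ s, f x = f p + f q + ∑ x ∈ (s.erase p).erase q, f x := by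
        rw [← add_sum_erase s f hp, ← add_sum_erase _ f hq', add_assoc]
    _ < 0 := by
        have := add_lt_add_of_lt_of_le hfpq hrest
        rwa [neg_add_cancel] at this

end PositivePart

open scoped Classical in
/-- The total positive valuation over unordered pairs is written as half the sum over ordered
pairs. -/
theorem stmt10_general {α : Type*} [Fintype α] [DecidableEq α] (v : α → α → ℝ)
    (hsymm : ∀ i j, v i j = v j i)
    (hacyc : (SimpleGraph.fromRel fun i j => 0 < v i j).IsAcyclic)
    (hneg : ∀ i j, i ≠ j → v i j ≤ 0 →
      v i j < -((∑ p ∈ Finset.univ.offDiag.filter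
          (fun p : α × α => 0 < v p.1 p.2), v p.1 p.2) / 2))
    (C : Finset α) (hC : 3 ≤ C.card) :
    coalSW v C < 0 := by
  obtain ⟨x, hx, y, hy, hxy, hnadj⟩ := (hacyc.cliqueFree le_rfl).exists_not_adj hC
  have hvxy : v x y ≤ 0 := not_lt.1 fun h => hnadj ⟨hxy, Or.inl h⟩
  have hpair := add_lt_add (hneg x y hxy hvxy) (hneg y x hxy.symm (hsymm x y ▸ hvxy))
  rw [coalSW, sum_erase_eq_sum_offDiag]
  refine div_neg_of_neg_of_pos ?_ (by positivity)
  refine sum_neg_of_add_lt_neg_sum_pos (offDiag_mono (subset_univ C)) (p := (x, y)) (q := (y, x))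
    (by simp [hx, hy, hxy]) (by simp [hx, hy, hxy.symm]) (by simp [hxy]) ?_
  linarith

open scoped Classical in
/-- Tree domain: if the simple graph of positive valuations is acyclic (a forest) and
every nonpositive valuation between distinct agents is smaller than the negative of the
total sum of positive valuations over unordered pairs (written as half the sum over
ordered pairs, which is the same for a symmetric valuation), then every coalition with
at least 3 agents has negative social welfare. -/
theorem stmt10 {α : Type*} [Fintype α] [DecidableEq α] (v : α → α → ℝ)
    (hsymm : ∀ i j, v i j = v j i) (hdiag : ∀ i, v i i = 0)
    (hacyc : (SimpleGraph.fromRel fun i j => 0 < v i j).IsAcyclic)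
    (hneg : ∀ i j, i ≠ j → v i j ≤ 0 →
      v i j < -((∑ p ∈ Finset.univ.offDiag.filter
          (fun p : α × α => 0 < v p.1 p.2), v p.1 p.2) / 2))
    (C : Finset α) (hC : 3 ≤ C.card) :
    coalSW v C < 0 :=
  stmt10_general v hsymm hacyc hneg C hC
end
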